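/- Let Θ be a tree system of cut pairs over T whose constituent spaces M_v (v ∈ V) are connected, have no cut points, and have no cut pairs, and let M̄_T be the completion of the total space. Then: (1) M̄_T is connected and has no cut points; (2) the cut pairs of M̄_T are exactly the two-point subspaces M_w for w ∈ W, and each of these is inseparable (no other cut pair separates its two points). -/

import Mathlib

section TreeSystem

open scoped Classical

variable {U : Type*} (M : U → Type*)

noncomputable def fiberDistM (m : ∀ u, MetricSpace (M u)) (a b : Σ u, M u) : ℝ :=
  letI := m b.1
  if h : a.1 = b.1 then dist (h ▸ a.2) b.2 else 0

noncomputable def chainLengthM (m : ∀ u, MetricSpace (M u))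
    (c : List ((Σ u, M u) × (Σ u, M u))) : ℝ :=
  (c.map fun pr => fiberDistM M m pr.1 pr.2).sum

def IsLinkingChainM (R : (Σ u, M u) → (Σ u, M u) → Prop)
    (c : List ((Σ u, M u) × (Σ u, M u))) (x y : Σ u, M u) : Prop :=
  ∃ hne : c ≠ [], (c.head hne).1 = x ∧ (c.getLast hne).2 = y ∧
    (∀ pr ∈ c, pr.1.1 = pr.2.1) ∧ c.Chain' (fun pr pr' => R pr.2 pr'.1)

noncomputable def quotDistM (m : ∀ u, MetricSpace (M u))
    (R : (Σ u, M u) → (Σ u, M u) → Prop) (x y : Σ u, M u) : ℝ :=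
  sInf {L : ℝ | ∃ c, IsLinkingChainM M R c x y ∧ chainLengthM M m c = L}

def cutRel (G : SimpleGraph U) (Vset Wset : Set U)
    (ie : ∀ v w : U, M w → M v) (a b : Σ u, M u) : Prop :=
  ∃ (v w : U) (x : M w), v ∈ Vset ∧ w ∈ Wset ∧ G.Adj v w ∧
    a = ⟨w, x⟩ ∧ b = ⟨v, ie v w x⟩

end TreeSystem

section CutPairs

variable {Z : Type*} [TopologicalSpace Z]

/-- The closed set `t` separates the points `x` and `y`: both lie outside `t` and in
different components of the complement of `t`. -/
def SeparatesPts (t : Set Z) (x y : Z) : Prop :=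
  x ∉ t ∧ y ∉ t ∧ ∀ C : Set Z, C ⊆ tᶜ → IsPreconnected C → x ∈ C → y ∉ C

/-- `s` is a cut pair: a two-point separating set neither of whose points is a cut point. -/
def IsCutPairSet (s : Set Z) : Prop :=
  (∃ a b : Z, a ≠ b ∧ s = {a, b}) ∧ ¬ IsPreconnected sᶜ ∧
    ∀ p ∈ s, IsPreconnected ({p}ᶜ : Set Z)

/-- A cut pair is inseparable if no other cut pair separates its two points. -/
def IsInseparableCutPair (s : Set Z) : Prop :=
  IsCutPairSet s ∧ ∀ t, IsCutPairSet t → t ≠ s →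
    ∀ a b : Z, a ≠ b → s = {a, b} → ¬ SeparatesPts t a b

end CutPairs


/-!
The quotient metric restricts to the given metric on every constituent space: a walk that leaves
the fibre `M_u` can only come back through the neighbouring fibre it left by, because `T` is a
tree, and the gluing maps are isometric. So every `M_u` embeds isometrically in `M̄_T`.

If `P` has at most two points, each `M_v ∖ P` is connected, and these pieces are chained together
along the tree through the points of the `M_w` outside `P`; as the total space is dense,
`M̄_T ∖ P` is connected unless `P` contains some `M_w`. This gives connectedness, the absence of
cut points, and that every cut pair is some `M_w`. Conversely, a walk from one side of an edge
`vw` to the other passes through `M_w`, so the closures of the two sides meet only in `M_w`,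
which therefore separates. Finally no cut pair `t` separates the two points of `M_w`: they lie in
the connected set `M_v ∖ t` for any neighbour `v` of `w`.
-/

section FiberDist

variable {U : Type*} {M : U → Type*} [∀ u, MetricSpace (M u)]

@[simp]
lemma fiberDistM_mk (u : U) (p q : M u) :
    fiberDistM M (fun _ => inferInstance) ⟨u, p⟩ ⟨u, q⟩ = dist p q := by
  simp [fiberDistM]

@[simp]
lemma fiberDistM_self (a : Σ u, M u) : fiberDistM M (fun _ => inferInstance) a a = 0 := by
  simp [fiberDistM]

lemma fiberDistM_nonneg (a b : Σ u, M u) : 0 ≤ fiberDistM M (fun _ => inferInstance) a b := by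
  unfold fiberDistM
  split_ifs <;> simp

lemma fiberDistM_triangle {a b c : Σ u, M u} (hab : a.1 = b.1) (hbc : b.1 = c.1) :
    fiberDistM M (fun _ => inferInstance) a c ≤
      fiberDistM M (fun _ => inferInstance) a b + fiberDistM M (fun _ => inferInstance) b c := by
  obtain ⟨u, p⟩ := a
  obtain ⟨_, q⟩ := b
  obtain ⟨_, r⟩ := c
  subst hab hbc
  simpa using dist_triangle p q r

lemma chainLengthM_nonneg (c : List ((Σ u, M u) × (Σ u, M u))) :
    0 ≤ chainLengthM M (fun _ => inferInstance) c :=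
  List.sum_nonneg fun _ h => by
    obtain ⟨pr, -, rfl⟩ := List.mem_map.1 h
    exact fiberDistM_nonneg _ _

end FiberDist

section LinkingChain

variable {U : Type*} {M : U → Type*} {R : (Σ u, M u) → (Σ u, M u) → Prop}
  {c : List ((Σ u, M u) × (Σ u, M u))} {pr : (Σ u, M u) × (Σ u, M u)} {x y : Σ u, M u}

lemma isLinkingChainM_singleton (h : pr.1.1 = pr.2.1) : IsLinkingChainM M R [pr] pr.1 pr.2 :=
  ⟨List.cons_ne_nil _ _, rfl, rfl, by simpa using h, List.isChain_singleton _⟩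

lemma IsLinkingChainM.cons (hc : IsLinkingChainM M R c x y) (hpr : pr.1.1 = pr.2.1)
    (hlink : R pr.2 x) : IsLinkingChainM M R (pr :: c) pr.1 y := by
  obtain ⟨hne, rfl, rfl, hfib, hchain⟩ := hc
  obtain ⟨pr', c, rfl⟩ := List.exists_cons_of_ne_nil hne
  exact ⟨List.cons_ne_nil _ _, rfl, rfl, List.forall_mem_cons.2 ⟨hpr, hfib⟩,
    List.isChain_cons_cons.2 ⟨hlink, hchain⟩⟩

lemma IsLinkingChainM.of_cons_cons {pr' : (Σ u, M u) × (Σ u, M u)}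
    (h : IsLinkingChainM M R (pr :: pr' :: c) x y) :
    x = pr.1 ∧ pr.1.1 = pr.2.1 ∧ R pr.2 pr'.1 ∧ IsLinkingChainM M R (pr' :: c) pr'.1 y := by
  obtain ⟨-, rfl, rfl, hfib, hchain⟩ := h
  obtain ⟨hlink, hchain⟩ := List.isChain_cons_cons.1 hchain
  exact ⟨rfl, hfib pr (by simp), hlink,
    ⟨List.cons_ne_nil _ _, rfl, rfl, fun q hq => hfib q (by simp [hq]), hchain⟩⟩

end LinkingChain

section Walks

variable {U : Type*} {M : U → Type*} (R : (Σ u, M u) → (Σ u, M u) → Prop)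

inductive TotalWalk : (Σ u, M u) → (Σ u, M u) → Type _
  | nil (x : Σ u, M u) : TotalWalk x x
  | hop {u : U} (p q : M u) {y : Σ u, M u} : TotalWalk ⟨u, q⟩ y → TotalWalk ⟨u, p⟩ y
  | glue {a b y : Σ u, M u} : Relation.SymmGen R a b → TotalWalk b y → TotalWalk a y

namespace TotalWalk

variable {R}

def support : ∀ {x y : Σ u, M u}, TotalWalk R x y → List (Σ u, M u)
  | _, _, nil x => [x]
  | _, _, hop a _ p => ⟨_, a⟩ :: p.support
  | _, _, @glue _ _ _ a _ _ _ p => a :: p.support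

lemma start_mem_support {x y : Σ u, M u} : ∀ p : TotalWalk R x y, x ∈ p.support
  | nil _ | hop _ _ _ | glue _ _ => List.mem_cons_self

def length : ∀ {x y : Σ u, M u}, TotalWalk R x y → ℕ
  | _, _, nil _ => 0
  | _, _, hop _ _ p => p.length + 1
  | _, _, glue _ p => p.length + 1

def append : ∀ {x y z : Σ u, M u}, TotalWalk R x y → TotalWalk R y z → TotalWalk R x z
  | _, _, _, nil _, q => q
  | _, _, _, hop a b p, q => hop a b (p.append q)
  | _, _, _, glue h p, q => glue h (p.append q)

variable [∀ u, MetricSpace (M u)]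

def cost : ∀ {x y : Σ u, M u}, TotalWalk R x y → ℝ
  | _, _, nil _ => 0
  | _, _, hop a b p => dist a b + p.cost
  | _, _, glue _ p => p.cost

lemma cost_nonneg {x y : Σ u, M u} : ∀ p : TotalWalk R x y, 0 ≤ p.cost
  | nil _ => le_rfl
  | hop _ _ p => add_nonneg dist_nonneg p.cost_nonneg
  | glue _ p => p.cost_nonneg

lemma cost_append {x y z : Σ u, M u} : ∀ (p : TotalWalk R x y) (q : TotalWalk R y z),
    (p.append q).cost = p.cost + q.cost
  | nil _, q => (zero_add _).symm
  | hop a b p, q => by simp only [append, cost, cost_append p q, add_assoc]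
  | glue _ p, q => cost_append p q

lemma exists_prefix_cost_le {x y : Σ u, M u} : ∀ (p : TotalWalk R x y) {m : Σ u, M u},
    m ∈ p.support → ∃ q : TotalWalk R x m, q.cost ≤ p.cost
  | nil _, m, hm => by
    obtain rfl : m = _ := List.mem_singleton.1 hm
    exact ⟨nil _, le_rfl⟩
  | hop a b p, m, hm => by
    rcases List.mem_cons.1 hm with rfl | hm
    · exact ⟨nil _, (hop a b p).cost_nonneg⟩
    · obtain ⟨q, hq⟩ := p.exists_prefix_cost_le hm
      exact ⟨hop a b q, (add_le_add_iff_left _).2 hq⟩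
  | glue h p, m, hm => by
    rcases List.mem_cons.1 hm with rfl | hm
    · exact ⟨nil _, p.cost_nonneg⟩
    · obtain ⟨q, hq⟩ := p.exists_prefix_cost_le hm
      exact ⟨glue h q, hq⟩

lemma exists_first_entry {u : U} : ∀ {b y : Σ u, M u} (p : TotalWalk R b y), b.1 ≠ u → y.1 = u →
    ∃ (c m : Σ u, M u) (p₁ : TotalWalk R b c) (p₂ : TotalWalk R m y),
      (∀ z ∈ p₁.support, z.1 ≠ u) ∧ Relation.SymmGen R c m ∧ m.1 = u ∧
      p₁.cost + p₂.cost = p.cost ∧ p₁.length + p₂.length < p.length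
  | _, _, nil _, hb, hy => absurd hy hb
  | _, _, hop a b p, hb, hy => by
    obtain ⟨c, m, p₁, p₂, havoid, hcm, hm, hcost, hlen⟩ := p.exists_first_entry hb hy
    refine ⟨c, m, hop a b p₁, p₂, List.forall_mem_cons.2 ⟨hb, havoid⟩, hcm, hm, ?_, ?_⟩
    · simp only [cost, ← hcost]
      ring
    · simp only [length]
      omega
  | b, _, glue (b := b') h p, hb, hy => by
    by_cases hb' : b'.1 = u
    · exact ⟨b, b', nil b, p, by simpa [support] using hb, h, hb', by simp [cost],
        by simp [length]⟩
    obtain ⟨c, m, p₁, p₂, havoid, hcm, hm, hcost, hlen⟩ := p.exists_first_entry hb' hy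
    refine ⟨c, m, glue h p₁, p₂, List.forall_mem_cons.2 ⟨hb, havoid⟩, hcm, hm, hcost, ?_⟩
    simp only [length]
    omega

lemma exists_of_fst_eq {x y : Σ u, M u} (h : x.1 = y.1) :
    ∃ p : TotalWalk R x y, p.cost = fiberDistM M (fun _ => inferInstance) x y := by
  obtain ⟨u, a⟩ := x
  obtain ⟨_, b⟩ := y
  subst h
  exact ⟨hop a b (nil _), by simp [cost]⟩

lemma exists_cost_eq_zero_of_eqvGen {x y : Σ u, M u} (h : Relation.EqvGen R x y) :
    ∃ p : TotalWalk R x y, p.cost = 0 := by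
  rw [← Relation.EqvGen.reflTransGen_symmGen] at h
  induction h using Relation.ReflTransGen.head_induction_on with
  | refl => exact ⟨nil _, rfl⟩
  | head hab _ ih =>
    obtain ⟨p, hp⟩ := ih
    exact ⟨glue hab p, hp⟩

lemma exists_isLinkingChainM : ∀ {x y : Σ u, M u} (p : TotalWalk R x y),
    ∃ c, IsLinkingChainM M (Relation.EqvGen R) c x y ∧
      chainLengthM M (fun _ => inferInstance) c = p.cost
  | _, _, nil x => ⟨[(x, x)], isLinkingChainM_singleton rfl, by simp [chainLengthM, cost]⟩
  | _, _, hop a b p => by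
    obtain ⟨c, hc, hlen⟩ := p.exists_isLinkingChainM
    refine ⟨(⟨_, a⟩, ⟨_, b⟩) :: c, hc.cons rfl (Relation.EqvGen.refl _), ?_⟩
    simp_all [chainLengthM, cost]
  | _, _, glue h p => by
    obtain ⟨c, hc, hlen⟩ := p.exists_isLinkingChainM
    refine ⟨(_, _) :: c, hc.cons rfl (Relation.EqvGen.symmGen_le_eqvGen R _ _ h), ?_⟩
    simp_all [chainLengthM, cost]

lemma exists_of_isLinkingChainM : ∀ (c : List ((Σ u, M u) × (Σ u, M u))) {x y : Σ u, M u},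
    IsLinkingChainM M (Relation.EqvGen R) c x y →
      ∃ p : TotalWalk R x y, p.cost = chainLengthM M (fun _ => inferInstance) c
  | [], _, _, h => absurd rfl h.1
  | [pr], _, _, ⟨_, rfl, rfl, hfib, _⟩ => by
    simpa [chainLengthM] using exists_of_fst_eq (R := R) (hfib pr (by simp))
  | pr :: pr' :: c, _, _, h => by
    obtain ⟨rfl, hfib, hlink, htail⟩ := h.of_cons_cons
    obtain ⟨p₁, hp₁⟩ := exists_of_fst_eq (R := R) hfib
    obtain ⟨p₂, hp₂⟩ := exists_cost_eq_zero_of_eqvGen hlink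
    obtain ⟨p₃, hp₃⟩ := exists_of_isLinkingChainM (pr' :: c) htail
    refine ⟨p₁.append (p₂.append p₃), ?_⟩
    simp only [cost_append, hp₁, hp₂, hp₃, chainLengthM, List.map_cons, List.sum_cons]
    ring

end TotalWalk

end Walks

section QuotDist

variable {U : Type*} {M : U → Type*} [∀ u, MetricSpace (M u)]
  {R : (Σ u, M u) → (Σ u, M u) → Prop} {x y : Σ u, M u}

lemma quotDistM_le_cost (p : TotalWalk R x y) :
    quotDistM M (fun _ => inferInstance) (Relation.EqvGen R) x y ≤ p.cost := by
  obtain ⟨c, hc, hlen⟩ := p.exists_isLinkingChainM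
  refine csInf_le ⟨0, ?_⟩ ⟨c, hc, hlen⟩
  rintro _ ⟨c', -, rfl⟩
  exact chainLengthM_nonneg c'

lemma le_quotDistM {K : ℝ} (p : TotalWalk R x y) (h : ∀ p : TotalWalk R x y, K ≤ p.cost) :
    K ≤ quotDistM M (fun _ => inferInstance) (Relation.EqvGen R) x y := by
  obtain ⟨c, hc, -⟩ := p.exists_isLinkingChainM
  refine le_csInf ⟨_, c, hc, rfl⟩ ?_
  rintro _ ⟨c', hc', rfl⟩
  obtain ⟨p', hp'⟩ := TotalWalk.exists_of_isLinkingChainM c' hc'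
  exact hp' ▸ h p'

variable {Z : Type*} [MetricSpace Z] {ι : (Σ u, M u) → Z}
  (hι : ∀ x y, dist (ι x) (ι y) = quotDistM M (fun _ => inferInstance) (Relation.EqvGen R) x y)
include hι

lemma dist_le_cost (p : TotalWalk R x y) : dist (ι x) (ι y) ≤ p.cost :=
  hι x y ▸ quotDistM_le_cost p

lemma apply_eq_of_rel {a b : Σ u, M u} (h : R a b) : ι a = ι b :=
  dist_le_zero.1 (dist_le_cost hι (.glue (.inl h) (.nil b)))

lemma dist_comp_sigmaMk_le (u : U) (p q : M u) : dist (ι ⟨u, p⟩) (ι ⟨u, q⟩) ≤ dist p q := by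
  simpa [TotalWalk.cost] using dist_le_cost hι (.hop p q (.nil _))

end QuotDist

lemma SimpleGraph.IsAcyclic.eq_of_reachable_deleteEdges {V : Type*} {G : SimpleGraph V}
    (hG : G.IsAcyclic) {u n n' : V} (h : G.Adj n u) (h' : G.Adj n' u)
    (hr : (G.deleteEdges {s(n, u)}).Reachable n n') : n = n' := by
  by_contra hne
  have hn'u : (G.deleteEdges {s(n, u)}).Adj n' u := by simp [h', h'.ne, Ne.symm hne]
  exact SimpleGraph.isBridge_iff.1 (SimpleGraph.isAcyclic_iff_forall_adj_isBridge.1 hG h)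
    (hr.trans hn'u.reachable)

structure IsTreeGluing {U : Type*} {M : U → Type*} [∀ u, MetricSpace (M u)]
    (G : SimpleGraph U) (Vset Wset : Set U) (ie : ∀ v w : U, M w → M v) : Prop where
  isTree : G.IsTree
  union_eq : Vset ∪ Wset = Set.univ
  disjoint : Disjoint Vset Wset
  adj_mem : ∀ u v, G.Adj u v → (u ∈ Vset ∧ v ∈ Wset) ∨ (u ∈ Wset ∧ v ∈ Vset)
  isometry : ∀ v w, v ∈ Vset → w ∈ Wset → G.Adj v w → Isometry (ie v w)

section Tree

variable {U : Type*} {M : U → Type*} {G : SimpleGraph U} {Vset Wset : Set U}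
  {ie : ∀ v w : U, M w → M v}

lemma adj_of_symmGen_cutRel {a b : Σ u, M u}
    (h : Relation.SymmGen (cutRel M G Vset Wset ie) a b) : G.Adj a.1 b.1 := by
  rcases h with ⟨v, w, x, -, -, hadj, rfl, rfl⟩ | ⟨v, w, x, -, -, hadj, rfl, rfl⟩
  exacts [hadj.symm, hadj]

lemma TotalWalk.reachable_deleteEdges {v w : U} : ∀ {x y : Σ u, M u}
    (p : TotalWalk (cutRel M G Vset Wset ie) x y), (∀ z ∈ p.support, z.1 ≠ w) →
      (G.deleteEdges {s(v, w)}).Reachable x.1 y.1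
  | _, _, .nil _, _ => .rfl
  | _, _, .hop _ _ p, h => p.reachable_deleteEdges fun z hz => h z (List.mem_cons_of_mem _ hz)
  | a, _, .glue (b := b) hab p, h => by
    have hb := h _ (List.mem_cons_of_mem _ p.start_mem_support)
    have hadj : (G.deleteEdges {s(v, w)}).Adj a.1 b.1 := by
      simp [adj_of_symmGen_cutRel hab, h _ List.mem_cons_self, hb]
    exact hadj.reachable.trans (p.reachable_deleteEdges fun z hz => h z (List.mem_cons_of_mem _ hz))

variable [∀ u, MetricSpace (M u)]

lemma TotalWalk.nonempty (hS : IsTreeGluing G Vset Wset ie)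
    (hne : ∀ w ∈ Wset, Nonempty (M w)) (x y : Σ u, M u) :
    Nonempty (TotalWalk (cutRel M G Vset Wset ie) x y) := by
  obtain ⟨u, a⟩ := x
  obtain ⟨u', b⟩ := y
  obtain ⟨W⟩ := hS.isTree.connected u u'
  induction W with
  | nil => exact ⟨.hop a b (.nil _)⟩
  | @cons u₁ u₂ _ hadj _ ih =>
    rcases hS.adj_mem _ _ hadj with ⟨hv, hw⟩ | ⟨hw, hv⟩
    · obtain ⟨z⟩ := hne u₂ hw
      obtain ⟨p⟩ := ih z b
      exact ⟨.hop a (ie u₁ u₂ z) (.glue (.inr ⟨u₁, u₂, z, hv, hw, hadj, rfl, rfl⟩) p)⟩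
    · obtain ⟨p⟩ := ih (ie u₂ u₁ a) b
      exact ⟨.glue (.inl ⟨u₂, u₁, a, hv, hw, hadj.symm, rfl, rfl⟩) p⟩

/-- Leaving the fibre over a vertex and returning through the same neighbouring fibre preserves
fibre distances, as the gluing maps are isometric. -/
lemma fiberDistM_eq_of_symmGen_cutRel (hS : IsTreeGluing G Vset Wset ie) {x b m c : Σ u, M u}
    (hxb : Relation.SymmGen (cutRel M G Vset Wset ie) x b)
    (hmc : Relation.SymmGen (cutRel M G Vset Wset ie) m c) (hxm : x.1 = m.1) (hbc : b.1 = c.1) :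
    fiberDistM M (fun _ => inferInstance) x m = fiberDistM M (fun _ => inferInstance) b c := by
  rcases hxb with ⟨v, w, p, hv, hw, hadj, rfl, rfl⟩ | ⟨v, w, p, hv, hw, hadj, rfl, rfl⟩ <;>
  rcases hmc with ⟨v', w', q, hv', hw', -, rfl, rfl⟩ | ⟨v', w', q, hv', hw', -, rfl, rfl⟩ <;>
  dsimp only at hxm hbc <;> subst hxm hbc
  · simp [(hS.isometry v w hv hw hadj).dist_eq]
  · exact absurd hw (Set.disjoint_left.1 hS.disjoint hv')
  · exact absurd hw' (Set.disjoint_left.1 hS.disjoint hv)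
  · simp [(hS.isometry v w hv hw hadj).dist_eq]

/-- By strong induction on the length: after its first step out of the fibre over `x.1`, the walk
can only return to it from the same neighbouring fibre, because `G` is a tree. -/
lemma TotalWalk.fiberDistM_le_cost (hS : IsTreeGluing G Vset Wset ie) {x y : Σ u, M u}
    (p : TotalWalk (cutRel M G Vset Wset ie) x y) (h : x.1 = y.1) :
    fiberDistM M (fun _ => inferInstance) x y ≤ p.cost := by
  induction hn : p.length using Nat.strong_induction_on generalizing x y with
  | _ n ih =>
  cases p with
  | nil => simp [cost]
  | hop a b p =>
    calc _ ≤ fiberDistM M (fun _ => inferInstance) ⟨_, a⟩ ⟨_, b⟩ +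
          fiberDistM M (fun _ => inferInstance) ⟨_, b⟩ y := fiberDistM_triangle rfl h
      _ ≤ dist a b + p.cost := add_le_add (by simp) (ih _ (by simp [length, ← hn]) p h rfl)
  | @glue _ b _ hxb p =>
    have hxb' := adj_of_symmGen_cutRel hxb
    obtain ⟨c, m, p₁, p₂, havoid, hcm, hm, hcost, hlen⟩ :=
      p.exists_first_entry hxb'.ne.symm h.symm
    have hbc : b.1 = c.1 := hS.isTree.isAcyclic.eq_of_reachable_deleteEdges hxb'.symm
      (hm ▸ adj_of_symmGen_cutRel hcm) (p₁.reachable_deleteEdges havoid)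
    simp only [length] at hn
    calc _ ≤ fiberDistM M (fun _ => inferInstance) x m +
          fiberDistM M (fun _ => inferInstance) m y := fiberDistM_triangle hm.symm (hm.trans h)
      _ = fiberDistM M (fun _ => inferInstance) b c +
          fiberDistM M (fun _ => inferInstance) m y := by
        rw [fiberDistM_eq_of_symmGen_cutRel hS hxb hcm.symm hm.symm hbc]
      _ ≤ p₁.cost + p₂.cost :=
        add_le_add (ih _ (by omega) p₁ hbc rfl) (ih _ (by omega) p₂ (hm.trans h) rfl)
      _ = _ := hcost

variable {Z : Type*} [MetricSpace Z] {ι : (Σ u, M u) → Z}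
  (hι : ∀ x y, dist (ι x) (ι y) =
    quotDistM M (fun _ => inferInstance) (Relation.EqvGen (cutRel M G Vset Wset ie)) x y)
include hι

lemma isometry_comp_sigmaMk (hS : IsTreeGluing G Vset Wset ie)
    (hne : ∀ w ∈ Wset, Nonempty (M w)) (u : U) : Isometry fun p : M u => ι ⟨u, p⟩ := by
  refine Isometry.of_dist_eq fun p q => le_antisymm (dist_comp_sigmaMk_le hι u p q) ?_
  obtain ⟨p₀⟩ := TotalWalk.nonempty hS hne ⟨u, p⟩ ⟨u, q⟩
  rw [hι]
  exact le_quotDistM p₀ fun p' => by simpa using p'.fiberDistM_le_cost hS rfl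

/-- Every walk from the `v`-side of the edge `vw` to the other side passes through the fibre
over `w`. -/
lemma infDist_image_fiber_le_dist (hS : IsTreeGluing G Vset Wset ie)
    (hne : ∀ w ∈ Wset, Nonempty (M w)) {v w : U} {a b : Σ u, M u}
    (ha : (G.deleteEdges {s(v, w)}).Reachable a.1 v)
    (hb : ¬ (G.deleteEdges {s(v, w)}).Reachable b.1 v) :
    Metric.infDist (ι a) (ι '' {m | m.1 = w}) ≤ dist (ι a) (ι b) := by
  obtain ⟨p₀⟩ := TotalWalk.nonempty hS hne a b
  rw [hι]
  refine le_quotDistM p₀ fun p => ?_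
  obtain ⟨m, hm, hmw⟩ : ∃ m ∈ p.support, m.1 = w := by
    by_contra! h
    exact hb ((p.reachable_deleteEdges h).symm.trans ha)
  obtain ⟨q, hq⟩ := p.exists_prefix_cost_le hm
  calc _ ≤ dist (ι a) (ι m) := Metric.infDist_le_dist_of_mem (Set.mem_image_of_mem ι hmw)
    _ ≤ q.cost := dist_le_cost hι q
    _ ≤ p.cost := hq

lemma image_fiber_subset_image_range {v w : U} (hv : v ∈ Vset) (hw : w ∈ Wset)
    (hadj : G.Adj v w) :
    ι '' {m | m.1 = w} ⊆ (fun p : M v => ι ⟨v, p⟩) '' Set.range (ie v w) := by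
  rintro _ ⟨⟨_, q⟩, rfl, rfl⟩
  exact ⟨_, ⟨q, rfl⟩, (apply_eq_of_rel hι ⟨v, _, q, hv, hw, hadj, rfl, rfl⟩).symm⟩

end Tree

section Topology

variable {X Y : Type*} [TopologicalSpace X] [TopologicalSpace Y]

lemma isPreconnected_compl_union_of_subsingleton [PreconnectedSpace X]
    (h₁ : ∀ p : X, IsPreconnected ({p}ᶜ : Set X))
    (h₂ : ∀ a b : X, a ≠ b → IsPreconnected ({a, b}ᶜ : Set X))
    {A B : Set X} (hA : A.Subsingleton) (hB : B.Subsingleton) : IsPreconnected (A ∪ B)ᶜ := by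
  rcases hA.eq_empty_or_singleton with rfl | ⟨a, rfl⟩ <;>
    rcases hB.eq_empty_or_singleton with rfl | ⟨b, rfl⟩
  · simpa using isPreconnected_univ
  · simpa using h₁ b
  · simpa using h₁ a
  · rcases eq_or_ne a b with rfl | hab
    · simpa using h₁ a
    · rw [Set.singleton_union]
      exact h₂ a b hab

lemma isPreconnected_range_diff_of_subset_pair [PreconnectedSpace X]
    (h₁ : ∀ p : X, IsPreconnected ({p}ᶜ : Set X))
    (h₂ : ∀ a b : X, a ≠ b → IsPreconnected ({a, b}ᶜ : Set X))
    {f : X → Y} (hf : Continuous f) (hinj : Function.Injective f) {T : Set Y} {c d : Y}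
    (hT : T ⊆ {c, d}) : IsPreconnected (Set.range f \ T) := by
  have hpre : f ⁻¹' T = f ⁻¹' (T ∩ {c}) ∪ f ⁻¹' (T ∩ {d}) := by
    rw [← Set.preimage_union, ← Set.inter_union_distrib_left, ← Set.insert_eq,
      Set.inter_eq_left.2 hT]
  rw [← Set.image_compl_preimage, hpre]
  exact (isPreconnected_compl_union_of_subsingleton h₁ h₂
    ((Set.subsingleton_singleton.anti Set.inter_subset_right).preimage hinj)
    ((Set.subsingleton_singleton.anti Set.inter_subset_right).preimage hinj)).image _
    hf.continuousOn

lemma isPreconnected_compl_of_range_diff [T1Space Y] {α : Type*} {f : α → Y} (hf : DenseRange f)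
    {T : Set Y} (hT : T.Finite) (h : IsPreconnected (Set.range f \ T)) : IsPreconnected Tᶜ := by
  refine h.subset_closure (fun z hz => hz.2) ?_
  simpa [Set.sdiff_eq, Set.inter_comm] using hf.open_subset_closure_inter hT.isClosed.isOpen_compl

lemma exists_notMem_of_finite [T1Space X] [PreconnectedSpace X] [Nontrivial X] {s : Set X}
    (hs : s.Finite) : ∃ p, p ∉ s := by
  by_contra! h
  have : Finite X := Set.finite_univ_iff.1 (hs.subset fun p _ => h p)
  obtain ⟨a, b, hab⟩ := exists_pair_ne X
  exact hab (isPreconnected_univ.subsingleton (Set.mem_univ a) (Set.mem_univ b))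

lemma closure_inter_closure_subset_of_infDist_le {Z : Type*} [MetricSpace Z] {A B S : Set Z}
    (hS : IsClosed S) (hSne : S.Nonempty) (h : ∀ a ∈ A, ∀ b ∈ B, Metric.infDist a S ≤ dist a b) :
    closure A ∩ closure B ⊆ S := by
  rintro z ⟨hzA, hzB⟩
  have hclosed : IsClosed {q : Z × Z | Metric.infDist q.1 S ≤ dist q.1 q.2} :=
    isClosed_le ((Metric.continuous_infDist_pt S).comp continuous_fst) continuous_dist
  have hzz : ((z, z) : Z × Z) ∈ closure (A ×ˢ B) := by
    rw [closure_prod_eq]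
    exact ⟨hzA, hzB⟩
  have hz : Metric.infDist z S ≤ 0 := by
    simpa using closure_minimal (fun q hq => h q.1 hq.1 q.2 hq.2) hclosed hzz
  rw [← hS.closure_eq, Metric.mem_closure_iff_infDist_zero hSne]
  exact le_antisymm hz Metric.infDist_nonneg

lemma SimpleGraph.Connected.isPreconnected_iUnion {V : Type*} {G : SimpleGraph V}
    (hG : G.Connected) {s : V → Set X} (hs : ∀ u, IsPreconnected (s u))
    (hadj : ∀ u u', G.Adj u u' → (s u ∩ s u').Nonempty) : IsPreconnected (⋃ u, s u) :=
  IsPreconnected.iUnion_of_reflTransGen hs fun u u' =>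
    Relation.ReflTransGen.mono hadj u u' ((SimpleGraph.reachable_iff_reflTransGen u u').1 (hG u u'))

end Topology

section Gluing

variable {U : Type*} {M : U → Type*} [∀ u, MetricSpace (M u)] {G : SimpleGraph U}
  {Vset Wset : Set U} {ie : ∀ v w : U, M w → M v}

lemma IsTreeGluing.exists_two_adj (hS : IsTreeGluing G Vset Wset ie) {w : U} (hw : w ∈ Wset)
    (hfin : (G.neighborSet w).Finite) (h2 : 2 ≤ (G.neighborSet w).ncard) :
    ∃ v v', v ∈ Vset ∧ v' ∈ Vset ∧ G.Adj v w ∧ G.Adj v' w ∧ v ≠ v' := by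
  have hV : ∀ a, G.Adj w a → a ∈ Vset := fun a ha =>
    (hS.adj_mem w a ha).elim (fun h => absurd hw (Set.disjoint_left.1 hS.disjoint h.1)) And.right
  obtain ⟨a, b, ha, hb, hab⟩ := (Set.one_lt_ncard_iff hfin).1 h2
  exact ⟨a, b, hV a ha, hV b hb, ha.symm, hb.symm, hab⟩

variable {Z : Type*} {ι : (Σ u, M u) → Z}
  (hglue : ∀ {a b}, cutRel M G Vset Wset ie a b → ι a = ι b)
include hglue

lemma IsTreeGluing.iUnion_eq_range_diff (hS : IsTreeGluing G Vset Wset ie)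
    (hnb : ∀ w ∈ Wset, ∃ v ∈ Vset, G.Adj v w) {T : Set Z} {s : U → Set Z}
    (hsV : ∀ v ∈ Vset, s v = Set.range (fun p : M v => ι ⟨v, p⟩) \ T)
    (hsW : ∀ w ∈ Wset, ∃ z : M w, ι ⟨w, z⟩ ∉ T ∧ s w = {ι ⟨w, z⟩}) :
    ⋃ u, s u = Set.range ι \ T := by
  refine Set.Subset.antisymm (Set.iUnion_subset fun u x hx => ?_) ?_
  · rcases (Set.ext_iff.1 hS.union_eq u).2 trivial with hu | hu
    · rw [hsV u hu] at hx
      obtain ⟨⟨p, rfl⟩, hxT⟩ := hx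
      exact ⟨⟨_, rfl⟩, hxT⟩
    · obtain ⟨z, hz, hsz⟩ := hsW u hu
      obtain rfl : x = _ := hsz ▸ hx
      exact ⟨⟨_, rfl⟩, hz⟩
  · rintro _ ⟨⟨⟨u, p⟩, rfl⟩, hxT⟩
    rcases (Set.ext_iff.1 hS.union_eq u).2 trivial with hu | hu
    · exact Set.mem_iUnion.2 ⟨u, by rw [hsV u hu]; exact ⟨⟨p, rfl⟩, hxT⟩⟩
    · obtain ⟨v, hv, hadj⟩ := hnb u hu
      have hp := hglue ⟨v, u, p, hv, hu, hadj, rfl, rfl⟩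
      exact Set.mem_iUnion.2 ⟨v, by rw [hsV v hv, hp]; exact ⟨⟨_, rfl⟩, hp ▸ hxT⟩⟩

variable [TopologicalSpace Z]

/-- Each `M_w` contributes a one-point piece `{ι z}` with `ι z ∉ T`, which meets the pieces
`ι(M_v) \ T` of all neighbours `v` of `w`. -/
lemma IsTreeGluing.isPreconnected_range_diff (hS : IsTreeGluing G Vset Wset ie)
    (hnb : ∀ w ∈ Wset, ∃ v ∈ Vset, G.Adj v w) {T : Set Z}
    (hpiece : ∀ v ∈ Vset, IsPreconnected (Set.range (fun p : M v => ι ⟨v, p⟩) \ T))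
    (hbridge : ∀ w ∈ Wset, ¬ ι '' {m | m.1 = w} ⊆ T) : IsPreconnected (Set.range ι \ T) := by
  classical
  have hbridge' : ∀ w ∈ Wset, ∃ z : M w, ι ⟨w, z⟩ ∉ T := fun w hw => by
    obtain ⟨_, ⟨⟨_, z⟩, rfl, rfl⟩, hz⟩ := Set.not_subset.1 (hbridge w hw)
    exact ⟨z, hz⟩
  choose z hz using hbridge'
  let s : U → Set Z := fun u =>
    if h : u ∈ Wset then {ι ⟨u, z u h⟩} else Set.range (fun p : M u => ι ⟨u, p⟩) \ T
  have hsV : ∀ v ∈ Vset, s v = Set.range (fun p : M v => ι ⟨v, p⟩) \ T :=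
    fun v hv => dif_neg (Set.disjoint_left.1 hS.disjoint hv)
  have hsW : ∀ w (hw : w ∈ Wset), s w = {ι ⟨w, z w hw⟩} := fun w hw => dif_pos hw
  have hmeet : ∀ v w, v ∈ Vset → w ∈ Wset → G.Adj v w → (s v ∩ s w).Nonempty := by
    intro v w hv hw hadj
    refine ⟨ι ⟨w, z w hw⟩, ?_, by rw [hsW w hw]; rfl⟩
    rw [hsV v hv]
    exact ⟨⟨_, (hglue ⟨v, w, _, hv, hw, hadj, rfl, rfl⟩).symm⟩, hz w hw⟩
  rw [← hS.iUnion_eq_range_diff hglue hnb hsV fun w hw => ⟨z w hw, hz w hw, hsW w hw⟩]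
  refine hS.isTree.connected.isPreconnected_iUnion (fun u => ?_) fun a b hab => ?_
  · rcases (Set.ext_iff.1 hS.union_eq u).2 trivial with hu | hu
    · rw [hsV u hu]
      exact hpiece u hu
    · rw [hsW u hu]
      exact isPreconnected_singleton
  · rcases hS.adj_mem a b hab with ⟨ha, hb⟩ | ⟨ha, hb⟩
    · exact hmeet a b ha hb hab
    · rw [Set.inter_comm]
      exact hmeet b a hb ha hab.symm

end Gluing

section Completion

variable {U : Type*} {M : U → Type*} [∀ u, MetricSpace (M u)] {G : SimpleGraph U}
  {Vset Wset : Set U} {ie : ∀ v w : U, M w → M v} {Z : Type*} [MetricSpace Z]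
  {ι : (Σ u, M u) → Z}
  (hι : ∀ x y, dist (ι x) (ι y) =
    quotDistM M (fun _ => inferInstance) (Relation.EqvGen (cutRel M G Vset Wset ie)) x y)
include hι

lemma exists_notMem_image_fiber (hS : IsTreeGluing G Vset Wset ie)
    (hne : ∀ w ∈ Wset, Nonempty (M w)) {v w : U} (hv : v ∈ Vset) (hw : w ∈ Wset)
    (hadj : G.Adj v w) [Finite (M w)] [Nontrivial (M w)] [ConnectedSpace (M v)] :
    ∃ p : M v, ι ⟨v, p⟩ ∉ ι '' {m | m.1 = w} := by
  have : Nontrivial (M v) := (hS.isometry v w hv hw hadj).injective.nontrivial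
  obtain ⟨p, hp⟩ := exists_notMem_of_finite (Set.finite_range (ie v w))
  refine ⟨p, fun hpS => hp ?_⟩
  obtain ⟨_, hq, hqp⟩ := image_fiber_subset_image_range hι hv hw hadj hpS
  exact (isometry_comp_sigmaMk hι hS hne v).injective hqp ▸ hq

/-- The closures of the images of the two sides of the edge `vw` cover `Z` and meet only in the
image of `M_w`, and both sides contain points outside it. -/
lemma not_isPreconnected_compl_image_fiber (hS : IsTreeGluing G Vset Wset ie)
    (hne : ∀ w ∈ Wset, Nonempty (M w)) (hdense : DenseRange ι) {v v' w : U} (hv : v ∈ Vset)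
    (hv' : v' ∈ Vset) (hw : w ∈ Wset) (hadj : G.Adj v w) (hadj' : G.Adj v' w) (hvv' : v ≠ v')
    [Finite (M w)] [Nontrivial (M w)] [ConnectedSpace (M v)] [ConnectedSpace (M v')] :
    ¬ IsPreconnected (ι '' {m | m.1 = w})ᶜ := by
  set S := ι '' {m : Σ u, M u | m.1 = w}
  let side : Set (Σ u, M u) := {a | (G.deleteEdges {s(v, w)}).Reachable a.1 v}
  have hSfin : S.Finite := (Set.finite_range fun p : M w => ι ⟨w, p⟩).subset
    (by rintro _ ⟨⟨_, p⟩, rfl, rfl⟩; exact ⟨p, rfl⟩)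
  have hSne : S.Nonempty := ⟨_, ⟨w, Classical.arbitrary (M w)⟩, rfl, rfl⟩
  have hcap : closure (ι '' side) ∩ closure (ι '' sideᶜ) ⊆ S :=
    closure_inter_closure_subset_of_infDist_le hSfin.isClosed hSne <| by
      rintro _ ⟨a, ha, rfl⟩ _ ⟨b, hb, rfl⟩
      exact infDist_image_fiber_le_dist hι hS hne ha hb
  have hcover : closure (ι '' side) ∪ closure (ι '' sideᶜ) = Set.univ := by
    rw [← closure_union, ← Set.image_union, Set.union_compl_self, Set.image_univ,
      hdense.closure_range]
  have hv'side : ¬ (G.deleteEdges {s(v, w)}).Reachable v' v := fun h =>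
    hvv' (hS.isTree.isAcyclic.eq_of_reachable_deleteEdges hadj hadj' h.symm)
  obtain ⟨p, hp⟩ := exists_notMem_image_fiber hι hS hne hv hw hadj
  obtain ⟨p', hp'⟩ := exists_notMem_image_fiber hι hS hne hv' hw hadj'
  intro hpre
  obtain ⟨z, hzS, hz⟩ := isPreconnected_closed_iff.1 hpre _ _ isClosed_closure isClosed_closure
    (by rw [hcover]; exact Set.subset_univ _)
    ⟨_, hp, subset_closure (Set.mem_image_of_mem ι (show ⟨v, p⟩ ∈ side from .rfl))⟩
    ⟨_, hp', subset_closure (Set.mem_image_of_mem ι (show ⟨v', p'⟩ ∈ sideᶜ from hv'side))⟩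
  exact hzS (hcap hz)

end Completion

lemma finite_and_nontrivial_of_two {α : Type*} (h : ∃ x y : α, x ≠ y ∧ ∀ z, z = x ∨ z = y) :
    Finite α ∧ Nontrivial α := by
  obtain ⟨x, y, hxy, hz⟩ := h
  exact ⟨Set.finite_univ_iff.1 ((Set.toFinite {x, y}).subset fun z _ => hz z), ⟨x, y, hxy⟩⟩

lemma exists_image_fiber_eq_pair {U Z : Type*} {M : U → Type*} {ι : (Σ u, M u) → Z} {w : U}
    (hinj : Function.Injective fun p : M w => ι ⟨w, p⟩)
    (h : ∃ x y : M w, x ≠ y ∧ ∀ z, z = x ∨ z = y) :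
    ∃ a b, a ≠ b ∧ ι '' {m | m.1 = w} = {a, b} := by
  obtain ⟨x, y, hxy, hz⟩ := h
  refine ⟨_, _, hinj.ne hxy, Set.ext fun a => ⟨?_, ?_⟩⟩
  · rintro ⟨⟨_, z⟩, rfl, rfl⟩
    rcases hz z with rfl | rfl <;> simp
  · rintro (rfl | rfl)
    exacts [⟨⟨w, x⟩, rfl, rfl⟩, ⟨⟨w, y⟩, rfl, rfl⟩]

section CutPairClassification

variable {U Z : Type*} [TopologicalSpace Z] {Wset : Set U} {S : U → Set Z}
  (hpair : ∀ w ∈ Wset, ∃ a b, a ≠ b ∧ S w = {a, b})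
  (hpre : ∀ {T : Set Z} {c d : Z}, T ⊆ {c, d} → (∀ w ∈ Wset, ¬ S w ⊆ T) → IsPreconnected Tᶜ)
include hpair hpre

lemma connectedSpace_of_pairs [Nonempty Z] : ConnectedSpace Z where
  isPreconnected_univ := by
    refine Set.compl_empty ▸ hpre (Set.empty_subset {Classical.arbitrary Z, Classical.arbitrary Z})
      fun w hw hsub => ?_
    obtain ⟨a, b, -, hSw⟩ := hpair w hw
    exact Set.notMem_empty a (hsub (hSw ▸ Set.mem_insert a {b}))
  toNonempty := inferInstance

lemma isPreconnected_compl_singleton_of_pairs (p : Z) : IsPreconnected ({p}ᶜ : Set Z) := by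
  refine hpre (c := p) (d := p) (by simp) fun w hw hsub => ?_
  obtain ⟨a, b, hab, hSw⟩ := hpair w hw
  rw [hSw, Set.pair_subset_iff, Set.mem_singleton_iff, Set.mem_singleton_iff] at hsub
  exact hab (hsub.1.trans hsub.2.symm)

lemma exists_eq_of_isCutPairSet {s : Set Z} (hs : IsCutPairSet s) : ∃ w ∈ Wset, s = S w := by
  obtain ⟨⟨a, b, hab, rfl⟩, hsep, -⟩ := hs
  by_contra! hne
  refine hsep (hpre subset_rfl fun w hw hsub => hne w hw ?_)
  obtain ⟨x, y, hxy, hSw⟩ := hpair w hw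
  refine (Set.eq_of_subset_of_ncard_le hsub ?_ (Set.toFinite _)).symm
  rw [hSw, Set.ncard_pair hab, Set.ncard_pair hxy]

lemma isCutPairSet_iff_of_pairs (hsep : ∀ w ∈ Wset, ¬ IsPreconnected (S w)ᶜ) (s : Set Z) :
    IsCutPairSet s ↔ ∃ w ∈ Wset, s = S w :=
  ⟨exists_eq_of_isCutPairSet hpair hpre, fun ⟨w, hw, hs⟩ => hs ▸
    ⟨hpair w hw, hsep w hw, fun p _ => isPreconnected_compl_singleton_of_pairs hpair hpre p⟩⟩

lemma IsCutPairSet.isInseparableCutPair_of_pairs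
    (hins : ∀ w ∈ Wset, ∀ {T : Set Z} {c d : Z}, T ⊆ {c, d} →
      ∃ C ⊆ Tᶜ, IsPreconnected C ∧ S w ⊆ C ∪ T)
    {s : Set Z} (hs : IsCutPairSet s) : IsInseparableCutPair s := by
  refine ⟨hs, fun t ht _ a b _ hsab ⟨hat, hbt, hsep⟩ => ?_⟩
  obtain ⟨w, hw, rfl⟩ := exists_eq_of_isCutPairSet hpair hpre hs
  obtain ⟨c, d, -, rfl⟩ := ht.1
  obtain ⟨C, hCt, hC, hSC⟩ := hins w hw subset_rfl
  have hmem : ∀ x ∈ S w, x ∉ ({c, d} : Set Z) → x ∈ C := fun x hx hxt =>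
    (hSC hx).resolve_right hxt
  exact hsep C hCt hC (hmem a (hsab ▸ Set.mem_insert a {b}) hat)
    (hmem b (hsab ▸ Set.mem_insert_of_mem a rfl) hbt)

end CutPairClassification

section TreeSystem

variable {U : Type*} {M : U → Type*} [∀ u, MetricSpace (M u)] {G : SimpleGraph U}
  {Vset Wset : Set U} {ie : ∀ v w : U, M w → M v} {Z : Type*} [MetricSpace Z]
  {ι : (Σ u, M u) → Z} (hS : IsTreeGluing G Vset Wset ie) (hne : ∀ w ∈ Wset, Nonempty (M w))
  (hconn : ∀ v ∈ Vset, ConnectedSpace (M v))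
  (hnocut : ∀ v ∈ Vset, ∀ p : M v, IsPreconnected ({p}ᶜ : Set (M v)))
  (hnopair : ∀ v ∈ Vset, ∀ a b : M v, a ≠ b → IsPreconnected (({a, b} : Set (M v))ᶜ))
  (hι : ∀ x y, dist (ι x) (ι y) =
    quotDistM M (fun _ => inferInstance) (Relation.EqvGen (cutRel M G Vset Wset ie)) x y)
include hS hne hconn hnocut hnopair hι

lemma isPreconnected_range_comp_sigmaMk_diff {v : U} (hv : v ∈ Vset) {T : Set Z} {c d : Z}
    (hT : T ⊆ {c, d}) : IsPreconnected (Set.range (fun p : M v => ι ⟨v, p⟩) \ T) :=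
  have := hconn v hv
  have hiso := isometry_comp_sigmaMk hι hS hne v
  isPreconnected_range_diff_of_subset_pair (hnocut v hv) (hnopair v hv) hiso.continuous
    hiso.injective hT

lemma isPreconnected_compl_of_subset_pair (hnb : ∀ w ∈ Wset, ∃ v ∈ Vset, G.Adj v w)
    (hdense : DenseRange ι) {T : Set Z} {c d : Z} (hT : T ⊆ {c, d})
    (hbridge : ∀ w ∈ Wset, ¬ ι '' {m | m.1 = w} ⊆ T) : IsPreconnected Tᶜ :=
  isPreconnected_compl_of_range_diff hdense ((Set.toFinite _).subset hT)
    (hS.isPreconnected_range_diff (apply_eq_of_rel hι) hnb (fun _ hv =>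
      isPreconnected_range_comp_sigmaMk_diff hS hne hconn hnocut hnopair hι hv hT) hbridge)

lemma exists_isPreconnected_image_fiber_subset {v w : U} (hv : v ∈ Vset) (hw : w ∈ Wset)
    (hadj : G.Adj v w) {T : Set Z} {c d : Z} (hT : T ⊆ {c, d}) :
    ∃ C ⊆ Tᶜ, IsPreconnected C ∧ ι '' {m | m.1 = w} ⊆ C ∪ T :=
  ⟨_, fun _ hz => hz.2, isPreconnected_range_comp_sigmaMk_diff hS hne hconn hnocut hnopair hι hv hT,
    ((image_fiber_subset_image_range hι hv hw hadj).trans (Set.image_subset_range _ _)).trans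
      (Set.subset_sdiff_union _ _)⟩

end TreeSystem

theorem stmt16_general {U : Type*} (G : SimpleGraph U) (hT : G.IsTree)
    (Vset Wset : Set U) (hpart : Vset ∪ Wset = Set.univ) (hdisj : Disjoint Vset Wset)
    (hbip : ∀ u v, G.Adj u v → (u ∈ Vset ∧ v ∈ Wset) ∨ (u ∈ Wset ∧ v ∈ Vset))
    (hval : ∀ w ∈ Wset, (G.neighborSet w).Finite ∧ 2 ≤ (G.neighborSet w).ncard)
    (M : U → Type*) [∀ u, MetricSpace (M u)]
    (htwo : ∀ w ∈ Wset, ∃ x y : M w, x ≠ y ∧ ∀ z : M w, z = x ∨ z = y)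
    (ie : ∀ v w : U, M w → M v)
    (hiso : ∀ v w, v ∈ Vset → w ∈ Wset → G.Adj v w → ∀ x y : M w,
      dist (ie v w x) (ie v w y) = dist x y)
    -- constituent spaces are connected with no cut points and no cut pairs
    (hconn : ∀ v ∈ Vset, ConnectedSpace (M v))
    (hnocut : ∀ v ∈ Vset, ∀ p : M v, IsPreconnected ({p}ᶜ : Set (M v)))
    (hnopair : ∀ v ∈ Vset, ∀ a b : M v, a ≠ b →
      IsPreconnected (({a, b} : Set (M v))ᶜ))
    -- `Z` is the completion `M̄_T` of the total space
    (Z : Type*) [MetricSpace Z]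
    (ι : (Σ u, M u) → Z)
    (hι : ∀ x y, dist (ι x) (ι y) = quotDistM M (fun _ => inferInstance)
      (Relation.EqvGen (cutRel M G Vset Wset ie)) x y)
    (hdense : DenseRange ι) :
    (ConnectedSpace Z ∧ ∀ p : Z, IsPreconnected ({p}ᶜ : Set Z)) ∧
    (∀ s : Set Z, IsCutPairSet s ↔
      ∃ w ∈ Wset, s = ι '' {a : Σ u, M u | a.1 = w}) ∧
    (∀ s : Set Z, IsCutPairSet s → IsInseparableCutPair s) := by
  have hS : IsTreeGluing G Vset Wset ie :=
    ⟨hT, hpart, hdisj, hbip, fun v w hv hw hadj => .of_dist_eq (hiso v w hv hw hadj)⟩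
  have hne : ∀ w ∈ Wset, Nonempty (M w) := fun w hw => (htwo w hw).elim fun x _ => ⟨x⟩
  have hnb := fun w hw => hS.exists_two_adj hw (hval w hw).1 (hval w hw).2
  have hpair := fun w hw =>
    exists_image_fiber_eq_pair (isometry_comp_sigmaMk hι hS hne w).injective (htwo w hw)
  have hpre : ∀ {T : Set Z} {c d : Z}, T ⊆ {c, d} →
      (∀ w ∈ Wset, ¬ ι '' {m | m.1 = w} ⊆ T) → IsPreconnected Tᶜ :=
    isPreconnected_compl_of_subset_pair hS hne hconn hnocut hnopair hι
      (fun w hw => (hnb w hw).elim fun v ⟨_, hv, _, hadj, _⟩ => ⟨v, hv, hadj⟩) hdense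
  have hsep : ∀ w ∈ Wset, ¬ IsPreconnected (ι '' {m | m.1 = w})ᶜ := fun w hw => by
    obtain ⟨v, v', hv, hv', hadj, hadj', hvv'⟩ := hnb w hw
    obtain ⟨_, _⟩ := finite_and_nontrivial_of_two (htwo w hw)
    have := hconn v hv
    have := hconn v' hv'
    exact not_isPreconnected_compl_image_fiber hι hS hne hdense hv hv' hw hadj hadj' hvv'
  have hins : ∀ w ∈ Wset, ∀ {T : Set Z} {c d : Z}, T ⊆ {c, d} →
      ∃ C ⊆ Tᶜ, IsPreconnected C ∧ ι '' {m | m.1 = w} ⊆ C ∪ T := fun w hw _ _ _ hT =>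
    (hnb w hw).elim fun v ⟨_, hv, _, hadj, _⟩ =>
      exists_isPreconnected_image_fiber_subset hS hne hconn hnocut hnopair hι hv hw hadj hT
  obtain ⟨u⟩ := hT.connected.nonempty
  have : Nonempty Z := ((Set.ext_iff.1 hpart u).2 trivial).elim
    (fun hu => (hconn u hu).toNonempty.map (ι ⟨u, ·⟩)) fun hu => (hne u hu).map (ι ⟨u, ·⟩)
  exact ⟨⟨connectedSpace_of_pairs hpair hpre, isPreconnected_compl_singleton_of_pairs hpair hpre⟩,
    isCutPairSet_iff_of_pairs hpair hpre hsep,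
    fun s hs => hs.isInseparableCutPair_of_pairs hpair hpre hins⟩

/-- If the constituent spaces of a tree system of cut pairs are connected with
no cut points and no cut pairs, then the completion `M̄_T = Z` of the total space is connected
without cut points, and its cut pairs are exactly the two-point subspaces `M_w` (`w ∈ W`),
each of which is inseparable. -/
theorem stmt16 {U : Type*} [Countable U] (G : SimpleGraph U) (hT : G.IsTree)
    (Vset Wset : Set U) (hpart : Vset ∪ Wset = Set.univ) (hdisj : Disjoint Vset Wset)
    (hbip : ∀ u v, G.Adj u v → (u ∈ Vset ∧ v ∈ Wset) ∨ (u ∈ Wset ∧ v ∈ Vset))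
    (hval : ∀ w ∈ Wset, (G.neighborSet w).Finite ∧ 2 ≤ (G.neighborSet w).ncard)
    (M : U → Type*) [∀ u, MetricSpace (M u)] [∀ u, CompactSpace (M u)]
    (htwo : ∀ w ∈ Wset, ∃ x y : M w, x ≠ y ∧ ∀ z : M w, z = x ∨ z = y)
    (ie : ∀ v w : U, M w → M v)
    (hie : ∀ v w, v ∈ Vset → w ∈ Wset → G.Adj v w → Function.Injective (ie v w))
    (hiso : ∀ v w, v ∈ Vset → w ∈ Wset → G.Adj v w → ∀ x y : M w,
      dist (ie v w x) (ie v w y) = dist x y)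
    (hint : ∀ v w w', v ∈ Vset → w ∈ Wset → w' ∈ Wset → G.Adj v w → G.Adj v w' →
      w ≠ w' → (Set.range (ie v w) ∩ Set.range (ie v w')).Subsingleton)
    (hnull : ∀ v ∈ Vset, ∀ ε > (0 : ℝ),
      {w | w ∈ Wset ∧ G.Adj v w ∧ ε ≤ Metric.diam (Set.range (ie v w))}.Finite)
    (v₀ : U) (hv₀ : v₀ ∈ Vset)
    (hshrink : ∀ v ∈ Vset, ∀ k : ℕ, G.dist v₀ v = 2 * k → ∀ x y : M v,
      quotDistM M (fun _ => inferInstance) (Relation.EqvGen (cutRel M G Vset Wset ie))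
        ⟨v, x⟩ ⟨v, y⟩ ≤ (1 / 2 : ℝ) ^ k)
    -- constituent spaces are connected with no cut points and no cut pairs
    (hconn : ∀ v ∈ Vset, ConnectedSpace (M v))
    (hnocut : ∀ v ∈ Vset, ∀ p : M v, IsPreconnected ({p}ᶜ : Set (M v)))
    (hnopair : ∀ v ∈ Vset, ∀ a b : M v, a ≠ b →
      IsPreconnected (({a, b} : Set (M v))ᶜ))
    -- `Z` is the completion `M̄_T` of the total space
    (Z : Type*) [MetricSpace Z] [CompleteSpace Z]
    (ι : (Σ u, M u) → Z)
    (hι : ∀ x y, dist (ι x) (ι y) = quotDistM M (fun _ => inferInstance)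
      (Relation.EqvGen (cutRel M G Vset Wset ie)) x y)
    (hdense : DenseRange ι) :
    (ConnectedSpace Z ∧ ∀ p : Z, IsPreconnected ({p}ᶜ : Set Z)) ∧
    (∀ s : Set Z, IsCutPairSet s ↔
      ∃ w ∈ Wset, s = ι '' {a : Σ u, M u | a.1 = w}) ∧
    (∀ s : Set Z, IsCutPairSet s → IsInseparableCutPair s) :=
  stmt16_general G hT Vset Wset hpart hdisj hbip hval M htwo ie hiso hconn hnocut hnopair Z ι hι
    hdense
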